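/- For finite types X and Z, let p_n and p_a be joint probability mass functions on X × Z such that p_a(x,z) > 0 whenever p_n(x,z) > 0, and assume p_a(z|x) ≤ p_n_Z(z) for every pair (x,z) with p_n(x,z) > 0. Then for every real β with 0 ≤ β ≤ 1, the joint KL divergence satisfies KL[p_n ‖ p_a] ≥ I_{p_n}(X;Z) − β · H(p_n_Z). -/

import Mathlib

open Finset Real MeasureTheory

noncomputable section

/-- A probability mass function on a finite type. -/
def IsPmf {Ω : Type*} [Fintype Ω] (p : Ω → ℝ) : Prop :=
  (∀ ω, 0 ≤ p ω) ∧ ∑ ω, p ω = 1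

/-- KL divergence between pmfs on a finite type.
(The convention `0 · log (0 / q ω) = 0` holds automatically since `Real.log 0 = 0`.) -/
def KL {Ω : Type*} [Fintype Ω] (p q : Ω → ℝ) : ℝ :=
  ∑ ω, p ω * Real.log (p ω / q ω)

/-- Marginal on the first component of a joint pmf. -/
def margX {X Z : Type*} [Fintype X] [Fintype Z] (p : X × Z → ℝ) (x : X) : ℝ :=
  ∑ z, p (x, z)

/-- Marginal on the second component of a joint pmf. -/
def margZ {X Z : Type*} [Fintype X] [Fintype Z] (p : X × Z → ℝ) (z : Z) : ℝ :=
  ∑ x, p (x, z)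

/-- Conditional pmf of `z` given `x`. -/
def condZ {X Z : Type*} [Fintype X] [Fintype Z] (p : X × Z → ℝ) (x : X) (z : Z) : ℝ :=
  p (x, z) / margX p x

/-- Conditional pmf of `x` given `z`. -/
def condX {X Z : Type*} [Fintype X] [Fintype Z] (p : X × Z → ℝ) (z : Z) (x : X) : ℝ :=
  p (x, z) / margZ p z

/-- Shannon entropy of a pmf on a finite type. -/
def entropy {Ω : Type*} [Fintype Ω] (p : Ω → ℝ) : ℝ :=
  -∑ ω, p ω * Real.log (p ω)

/-- Cross entropy between two pmfs on a finite type. -/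
def crossEnt {Ω : Type*} [Fintype Ω] (p q : Ω → ℝ) : ℝ :=
  -∑ ω, p ω * Real.log (q ω)

/-- Mutual information of a joint pmf on `X × Z`. -/
def mutualInfo {X Z : Type*} [Fintype X] [Fintype Z] (p : X × Z → ℝ) : ℝ :=
  KL p (fun xz => margX p xz.1 * margZ p xz.2)

/-!
Writing `KL[p_n ‖ p_a] − I(X;Z) = Σ p_n log (p_nX(x) p_nZ(z) / p_a(x,z))` and splitting
`p_a(x,z) = p_aX(x) · p_a(z|x)`, the hypothesis `p_a(z|x) ≤ p_nZ(z)` leaves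
`KL[p_n ‖ p_a] − I(X;Z) ≥ KL[p_nX ‖ p_aX] ≥ 0` by Gibbs' inequality.
Since `H(p_nZ) ≥ 0`, subtracting `β · H(p_nZ)` for `β ≥ 0` only weakens the bound.
-/

lemma sub_le_mul_log_div {p q : ℝ} (hp : 0 ≤ p) (hq : 0 < q) : p - q ≤ p * log (p / q) := by
  have h := mul_le_mul_of_nonneg_left (self_sub_one_le_mul_log (div_nonneg hp hq.le)) hq.le
  rwa [mul_sub, mul_one, ← mul_assoc, mul_div_cancel₀ _ hq.ne'] at h

namespace IsPmf

variable {Ω : Type*} [Fintype Ω] {p q : Ω → ℝ}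

lemma le_one (hp : IsPmf p) (ω : Ω) : p ω ≤ 1 :=
  hp.2 ▸ single_le_sum (fun i _ => hp.1 i) (mem_univ ω)

lemma entropy_nonneg (hp : IsPmf p) : 0 ≤ entropy p := by
  have h : entropy p = ∑ ω, negMulLog (p ω) := by
    simp only [entropy, negMulLog, neg_mul, sum_neg_distrib]
  rw [h]
  exact sum_nonneg fun ω _ => negMulLog_nonneg (hp.1 ω) (hp.le_one ω)

lemma KL_nonneg (hp : IsPmf p) (hq : IsPmf q) (hpq : ∀ ω, 0 < p ω → 0 < q ω) :
    0 ≤ KL p q := by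
  have term : ∀ ω, p ω - q ω ≤ p ω * log (p ω / q ω) := fun ω => by
    rcases (hp.1 ω).eq_or_lt with h0 | hpos
    · simp [← h0, hq.1 ω]
    · exact sub_le_mul_log_div (hp.1 ω) (hpq ω hpos)
  calc (0 : ℝ) = ∑ ω, (p ω - q ω) := by rw [sum_sub_distrib, hp.2, hq.2, sub_self]
    _ ≤ KL p q := sum_le_sum fun ω _ => term ω

end IsPmf

lemma log_div_le_log_div_sub_log_div {n a nX nZ aX : ℝ} (hn : 0 < n) (ha : 0 < a)
    (hnX : 0 < nX) (hnZ : 0 < nZ) (haX : 0 < aX) (hle : a / aX ≤ nZ) :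
    log (nX / aX) ≤ log (n / a) - log (n / (nX * nZ)) := by
  have h := log_le_log (div_pos ha haX) hle
  rw [log_div ha.ne' haX.ne'] at h
  rw [log_div hnX.ne' haX.ne', log_div hn.ne' ha.ne', log_div hn.ne' (by positivity),
    log_mul hnX.ne' hnZ.ne']
  linarith

section JointPmf

variable {X Z : Type*} [Fintype X] [Fintype Z] {p : X × Z → ℝ}

lemma le_margX (hp : ∀ ω, 0 ≤ p ω) (x : X) (z : Z) : p (x, z) ≤ margX p x :=
  single_le_sum (fun i _ => hp (x, i)) (mem_univ z)

lemma le_margZ (hp : ∀ ω, 0 ≤ p ω) (x : X) (z : Z) : p (x, z) ≤ margZ p z :=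
  single_le_sum (fun i _ => hp (i, z)) (mem_univ x)

lemma IsPmf.margX (hp : IsPmf p) : IsPmf (margX p) :=
  ⟨fun x => sum_nonneg fun z _ => hp.1 (x, z), by
    simpa only [_root_.margX, ← Fintype.sum_prod_type] using hp.2⟩

lemma IsPmf.margZ (hp : IsPmf p) : IsPmf (margZ p) :=
  ⟨fun z => sum_nonneg fun x _ => hp.1 (x, z), by
    simpa only [_root_.margZ, sum_comm (γ := Z), ← Fintype.sum_prod_type] using hp.2⟩

lemma sum_mul_comp_fst (p : X × Z → ℝ) (f : X → ℝ) :
    ∑ ω, p ω * f ω.1 = ∑ x, margX p x * f x := by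
  simp only [Fintype.sum_prod_type, _root_.margX, sum_mul]

lemma KL_margX_le_KL_sub_mutualInfo {pn pa : X × Z → ℝ} (hpn : ∀ ω, 0 ≤ pn ω)
    (hpa : ∀ ω, 0 ≤ pa ω) (hpos : ∀ x z, 0 < pn (x, z) → 0 < pa (x, z))
    (hle : ∀ x z, 0 < pn (x, z) → condZ pa x z ≤ margZ pn z) :
    KL (margX pn) (margX pa) ≤ KL pn pa - mutualInfo pn := by
  have term : ∀ ω : X × Z, pn ω * log (margX pn ω.1 / margX pa ω.1) ≤
      pn ω * log (pn ω / pa ω) - pn ω * log (pn ω / (margX pn ω.1 * margZ pn ω.2)) := by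
    rintro ⟨x, z⟩
    rcases (hpn (x, z)).eq_or_lt with h0 | h
    · simp [← h0]
    · have ha := hpos x z h
      rw [← mul_sub]
      exact mul_le_mul_of_nonneg_left (log_div_le_log_div_sub_log_div h ha
        (h.trans_le (le_margX hpn x z)) (h.trans_le (le_margZ hpn x z))
        (ha.trans_le (le_margX hpa x z)) (hle x z h)) h.le
  calc KL (margX pn) (margX pa) = ∑ ω, pn ω * log (margX pn ω.1 / margX pa ω.1) :=
        (sum_mul_comp_fst pn fun x => log (margX pn x / margX pa x)).symm
    _ ≤ _ := (sum_le_sum fun ω _ => term ω).trans_eq (sum_sub_distrib _ _)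

lemma mutualInfo_le_KL {pn pa : X × Z → ℝ} (hpn : IsPmf pn) (hpa : IsPmf pa)
    (hpos : ∀ x z, 0 < pn (x, z) → 0 < pa (x, z))
    (hle : ∀ x z, 0 < pn (x, z) → condZ pa x z ≤ margZ pn z) :
    mutualInfo pn ≤ KL pn pa := by
  have hsupp : ∀ x, 0 < margX pn x → 0 < margX pa x := fun x hx => by
    obtain ⟨z, -, hz⟩ :=
      exists_lt_of_sum_lt (f := fun _ => (0 : ℝ)) (by simpa [margX] using hx)
    exact (hpos x z hz).trans_le (le_margX hpa.1 x z)
  have hgap := KL_margX_le_KL_sub_mutualInfo hpn.1 hpa.1 hpos hle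
  have hgibbs := hpn.margX.KL_nonneg hpa.margX hsupp
  linarith

end JointPmf

theorem kl_ge_mutualInfo_sub_beta_entropy_general {X Z : Type*} [Fintype X] [Fintype Z]
    (pn pa : X × Z → ℝ) (hpn : IsPmf pn) (hpa : IsPmf pa)
    (hpos : ∀ x z, 0 < pn (x, z) → 0 < pa (x, z))
    (hle : ∀ x z, 0 < pn (x, z) → condZ pa x z ≤ margZ pn z)
    (β : ℝ) (hβ0 : 0 ≤ β) :
    KL pn pa ≥ mutualInfo pn - β * entropy (margZ pn) := by
  have hI := mutualInfo_le_KL hpn hpa hpos hle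
  have hH := mul_nonneg hβ0 hpn.margZ.entropy_nonneg
  linarith

/-- Under the separability assumption `p_a(z|x) ≤ p_nZ(z)` on the support of `p_n`,
for every `β ∈ [0,1]` the joint KL divergence satisfies
`KL[p_n ‖ p_a] ≥ I(X;Z) − β · H(p_nZ)`. -/
theorem kl_ge_mutualInfo_sub_beta_entropy {X Z : Type*} [Fintype X] [Fintype Z]
    (pn pa : X × Z → ℝ) (hpn : IsPmf pn) (hpa : IsPmf pa)
    (hpos : ∀ x z, 0 < pn (x, z) → 0 < pa (x, z))
    (hle : ∀ x z, 0 < pn (x, z) → condZ pa x z ≤ margZ pn z)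
    (β : ℝ) (hβ0 : 0 ≤ β) (hβ1 : β ≤ 1) :
    KL pn pa ≥ mutualInfo pn - β * entropy (margZ pn) :=
  kl_ge_mutualInfo_sub_beta_entropy_general pn pa hpn hpa hpos hle β hβ0
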